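/- Every extrinsic symmetric triple (g,⟨·,·⟩,D,θ) decomposes into a direct sum of extrinsic symmetric triples: there exist ideals g₁ and g₂ of g such that g = g₁ ⊕ g₂, ⟨g₁,g₂⟩ = 0, the restriction of ⟨·,·⟩ to each gᵢ is nondegenerate, D(gᵢ) ⊆ gᵢ and θ(gᵢ) = gᵢ for i = 1,2, the Lie algebra g₁ is semisimple or zero, the Lie algebra g₂ contains no nonzero ideal that is a simple Lie algebra, and each gᵢ equipped with the restricted form, derivation and involution again satisfies the condition [gᵢ ∩ g₊ ∩ g⁻, gᵢ ∩ g₊ ∩ g⁻] = gᵢ ∩ g₊ ∩ g⁺. -/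

import Mathlib

/-!
The first summand is the sum `g₁` of the nonabelian minimal ideals of `g` (every simple ideal is
one). Such ideals are perfect and pairwise commuting, so the invariant form makes them pairwise
orthogonal and nondegenerate; hence `g₁` is nondegenerate and `g₂ := g₁ᗮ` is a complementary ideal
commuting with `g₁`. Being perfect, minimal nonabelian ideals are preserved by derivations and
permuted by automorphisms, so `g₁` and `g₂` are `D`- and `θ`-stable. An abelian ideal of `g₁` is
then an ideal of `g` commuting with all of `g₁`, hence lies in `g₁ ∩ g₁ᗮ = 0`, and `g₁` is
semisimple. Finally `g₊⁻` splits along `g₁ ⊕ g₂` and `⁅g₁, g₂⁆ = 0`, so `[g₊⁻, g₊⁻] = g₊⁺` splits.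
-/
def bracketSpan {g : Type*} [LieRing g] [LieAlgebra ℝ g] (s t : Submodule ℝ g) :
    Submodule ℝ g :=
  Submodule.span ℝ {z | ∃ x ∈ s, ∃ y ∈ t, z = ⁅x, y⁆}

open LieSubmodule

namespace LieAlgebra

variable {R L : Type*} [CommRing R] [LieRing L] [LieAlgebra R L]

lemma _root_.LieIdeal.isLieAbelian_iff_forall_lie_eq_zero {I : LieIdeal R L} :
    IsLieAbelian I ↔ ∀ x ∈ I, ∀ y ∈ I, ⁅x, y⁆ = 0 := by
  rw [lie_abelian_iff_lie_self_eq_bot, lie_eq_bot_iff]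

variable (R L) in
def nonabelianAtoms : Set (LieIdeal R L) := {I | IsAtom I ∧ ¬IsLieAbelian I}

variable (R L) in
/-- Contains every simple ideal (`mem_nonabelianAtoms_of_isSimple`), and is semisimple when `L`
carries a nondegenerate invariant form (`isSemisimple_semisimplePart`). -/
def semisimplePart : LieIdeal R L := sSup (nonabelianAtoms R L)

variable {s t : LieIdeal R L}

lemma lie_self_eq_of_mem_nonabelianAtoms (hs : s ∈ nonabelianAtoms R L) : ⁅s, s⁆ = s :=
  lie_eq_self_of_isAtom_of_nonabelian s hs.1 hs.2

lemma lie_eq_bot_of_mem_nonabelianAtoms (hs : s ∈ nonabelianAtoms R L)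
    (ht : t ∈ nonabelianAtoms R L) (hst : s ≠ t) : ⁅s, t⁆ = ⊥ :=
  eq_bot_iff.2 <| (lie_le_inf s t).trans (hs.1.disjoint_of_ne ht.1 hst).le_bot

lemma mem_nonabelianAtoms_of_isSimple (hs : IsSimple R s) : s ∈ nonabelianAtoms R L := by
  refine ⟨⟨?_, fun J hJ => ?_⟩, hs.non_abelian⟩
  · rintro rfl
    exact hs.non_abelian inferInstance
  · rcases hs.eq_bot_or_eq_top (LieIdeal.comap s.incl J) with h | h
    · rw [LieIdeal.comap_incl_eq_bot] at h
      exact disjoint_self.1 (h.mono_left hJ.le)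
    · rw [LieIdeal.comap_incl_eq_top] at h
      exact absurd h hJ.not_ge

lemma derivation_apply_mem_of_mem_nonabelianAtoms (D : LieDerivation R L L)
    (hs : s ∈ nonabelianAtoms R L) {x : L} (hx : x ∈ s) : D x ∈ s := by
  rw [← lie_self_eq_of_mem_nonabelianAtoms hs, ← mem_toSubmodule,
    lieIdeal_oper_eq_linear_span'] at hx
  refine Submodule.span_le (p := s.toSubmodule.comap D.toLinearMap) |>.2 ?_ hx
  rintro _ ⟨a, ha, b, hb, rfl⟩
  simp only [SetLike.mem_coe, Submodule.mem_comap, LieDerivation.coeFn_coe, D.apply_lie_eq_sub]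
  exact sub_mem (lie_mem_left R L s _ _ ha) (lie_mem_left R L s _ _ hb)

def _root_.LieEquiv.lieIdealOrderIso {L' : Type*} [LieRing L'] [LieAlgebra R L']
    (e : L' ≃ₗ⁅R⁆ L) : LieIdeal R L ≃o LieIdeal R L' where
  toFun I := I.comap e.toLieHom
  invFun I := I.comap e.symm.toLieHom
  left_inv I := by ext; simp
  right_inv I := by ext; simp
  map_rel_iff' {I J} := by
    refine ⟨fun h x hx => ?_, fun h => LieIdeal.comap_mono h⟩
    simpa using h (show e.symm x ∈ I.comap e.toLieHom by simpa using hx)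

lemma comap_mem_nonabelianAtoms {L' : Type*} [LieRing L'] [LieAlgebra R L'] (e : L' ≃ₗ⁅R⁆ L)
    (hs : s ∈ nonabelianAtoms R L) : s.comap e.toLieHom ∈ nonabelianAtoms R L' := by
  refine ⟨(e.lieIdealOrderIso.isAtom_iff s).2 hs.1, fun h => hs.2 ?_⟩
  rw [LieIdeal.isLieAbelian_iff_forall_lie_eq_zero] at h ⊢
  intro x hx y hy
  have := congrArg e (h (e.symm x) (by simpa using hx) (e.symm y) (by simpa using hy))
  rwa [e.map_lie, e.apply_symm_apply, e.apply_symm_apply, map_zero] at this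

lemma apply_mem_semisimplePart_of_forall (f : L →ₗ[R] L)
    (hf : ∀ s ∈ nonabelianAtoms R L, ∀ x ∈ s, f x ∈ semisimplePart R L) {x : L}
    (hx : x ∈ semisimplePart R L) : f x ∈ semisimplePart R L := by
  have h : ⨆ s ∈ nonabelianAtoms R L, s.toSubmodule ≤ (semisimplePart R L).toSubmodule.comap f :=
    iSup₂_le fun s hs y hy => hf s hs y hy
  rw [← sSup_toSubmodule_eq_iSup] at h
  exact h hx

lemma derivation_apply_mem_semisimplePart (D : LieDerivation R L L) {x : L}
    (hx : x ∈ semisimplePart R L) : D x ∈ semisimplePart R L :=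
  apply_mem_semisimplePart_of_forall D.toLinearMap
    (fun _ hs _ hy => le_sSup hs (derivation_apply_mem_of_mem_nonabelianAtoms D hs hy)) hx

lemma equiv_apply_mem_semisimplePart (e : L ≃ₗ⁅R⁆ L) {x : L}
    (hx : x ∈ semisimplePart R L) : e x ∈ semisimplePart R L :=
  apply_mem_semisimplePart_of_forall e.toLinearEquiv.toLinearMap
    (fun _ hs y hy => le_sSup (comap_mem_nonabelianAtoms e.symm hs) (by simpa using hy)) hx

section InvariantForm

open InvariantForm

variable {B : LinearMap.BilinForm R L} (hBinv : B.lieInvariant L) (hBrefl : B.IsRefl)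
include hBinv hBrefl

lemma lie_le_orthogonal_of_lie_le_orthogonal {I J K : LieIdeal R L}
    (h : ⁅I, K⁆ ≤ orthogonal B hBinv J) : ⁅I, J⁆ ≤ orthogonal B hBinv K := by
  rw [lieIdeal_oper_eq_span, lieSpan_le]
  rintro _ ⟨a, b, rfl⟩
  rw [SetLike.mem_coe, mem_orthogonal]
  intro z hz
  apply hBrefl
  rw [hBinv, neg_eq_zero]
  exact (mem_orthogonal B hBinv J _).1 (h (lie_coe_mem_lie a ⟨z, hz⟩)) b b.2

lemma le_orthogonal_of_lie_eq_bot (hs : s ∈ nonabelianAtoms R L) {I : LieIdeal R L}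
    (h : ⁅s, I⁆ = ⊥) : s ≤ orthogonal B hBinv I := by
  rw [← lie_self_eq_of_mem_nonabelianAtoms hs]
  exact lie_le_orthogonal_of_lie_le_orthogonal hBinv hBrefl (h.le.trans bot_le)

lemma disjoint_orthogonal_of_mem_nonabelianAtoms (hB : B.Nondegenerate)
    (hs : s ∈ nonabelianAtoms R L) : Disjoint s (orthogonal B hBinv s) := by
  rw [disjoint_iff]
  refine (hs.1.le_iff.1 inf_le_left).resolve_right fun h => hs.1.1 ?_
  -- if `s` were isotropic, `⁅s, s⁆ = s` would be orthogonal to everything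
  have hs' : ⁅s, ⊤⁆ ≤ orthogonal B hBinv s := (lie_le_left s ⊤).trans (h.symm.le.trans inf_le_right)
  have := lie_le_orthogonal_of_lie_le_orthogonal hBinv hBrefl hs'
  rwa [lie_self_eq_of_mem_nonabelianAtoms hs, ← toSubmodule_le_toSubmodule, orthogonal_toSubmodule,
    top_toSubmodule, LinearMap.BilinForm.orthogonal_top_eq_bot hB, le_bot_iff,
    toSubmodule_eq_bot] at this

lemma disjoint_semisimplePart_orthogonal (hB : B.Nondegenerate) :
    Disjoint (semisimplePart R L) (orthogonal B hBinv (semisimplePart R L)) := by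
  rw [disjoint_iff, LieSubmodule.eq_bot_iff]
  intro x hx
  obtain ⟨hx, hxo⟩ := (mem_inf _ _ _).1 hx
  rw [← mem_toSubmodule, semisimplePart, sSup_toSubmodule_eq_iSup, iSup_subtype'] at hx
  obtain ⟨f, hf, rfl⟩ := (Submodule.mem_iSup_iff_exists_finsupp _ _).1 hx
  have hfj : ∀ j, f j = 0 := by
    intro j
    refine disjoint_iff_inf_le.1 (disjoint_orthogonal_of_mem_nonabelianAtoms hBinv hBrefl hB j.2)
      ((mem_inf _ _ _).2 ⟨hf j, (mem_orthogonal _ _ _ _).2 fun y hy => ?_⟩)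
    -- distinct atoms are orthogonal, so on `j` the component `f j` pairs like `x`
    have hsum := (mem_orthogonal _ _ _ _).1 hxo y (le_sSup j.2 hy)
    rwa [map_finsuppSum, Finsupp.sum, Finset.sum_eq_single j] at hsum
    · intro i _ hij
      exact (mem_orthogonal _ _ _ _).1 (le_orthogonal_of_lie_eq_bot hBinv hBrefl i.2
        (lie_eq_bot_of_mem_nonabelianAtoms i.2 j.2 (Subtype.coe_ne_coe.2 hij)) (hf i)) y hy
    · intro hj
      rw [Finsupp.notMem_support_iff.1 hj, map_zero]
  simp [Finsupp.sum, hfj]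

lemma eq_bot_of_isLieAbelian_of_le_semisimplePart (hB : B.Nondegenerate) {I : LieIdeal R L}
    (hI : IsLieAbelian I) (hIle : I ≤ semisimplePart R L) : I = ⊥ := by
  have hcomm : ∀ s ∈ nonabelianAtoms R L, ⁅s, I⁆ = ⊥ := by
    intro s hs
    refine _root_.eq_bot_iff.2 <| (lie_le_inf s I).trans <| le_of_eq <|
      (hs.1.le_iff.1 inf_le_left).resolve_right fun h => hs.1.1 ?_
    rw [← lie_self_eq_of_mem_nonabelianAtoms hs, _root_.eq_bot_iff,
      ← (lie_abelian_iff_lie_self_eq_bot I).1 hI]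
    exact mono_lie (h.symm.le.trans inf_le_right) (h.symm.le.trans inf_le_right)
  have hG : semisimplePart R L ≤ orthogonal B hBinv I :=
    sSup_le fun s hs => le_orthogonal_of_lie_eq_bot hBinv hBrefl hs (hcomm s hs)
  have hIo : I ≤ orthogonal B hBinv (semisimplePart R L) := fun x hx =>
    (mem_orthogonal _ _ _ _).2 fun y hy => hBrefl _ _ ((mem_orthogonal _ _ _ _).1 (hG hy) x hx)
  exact disjoint_self.1 ((disjoint_semisimplePart_orthogonal hBinv hBrefl hB).mono hIle hIo)

end InvariantForm

section FiniteDimensional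

open InvariantForm

variable {K L : Type*} [Field K] [LieRing L] [LieAlgebra K L] [Module.Finite K L]
  {B : LinearMap.BilinForm K L} (hBinv : B.lieInvariant L) (hBrefl : B.IsRefl)
  (hB : B.Nondegenerate)
include hBinv hBrefl hB

lemma isCompl_semisimplePart_orthogonal :
    IsCompl (semisimplePart K L).toSubmodule
      (orthogonal B hBinv (semisimplePart K L)).toSubmodule := by
  rw [orthogonal_toSubmodule, LinearMap.BilinForm.isCompl_orthogonal_iff_disjoint hBrefl,
    ← orthogonal_toSubmodule _ hBinv, disjoint_toSubmodule]
  exact disjoint_semisimplePart_orthogonal hBinv hBrefl hB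

lemma isSemisimple_semisimplePart : IsSemisimple K (semisimplePart K L) := by
  set G := semisimplePart K L
  have hdisj := disjoint_semisimplePart_orthogonal hBinv hBrefl hB
  have hcomm : ⁅orthogonal B hBinv G, G⁆ = ⊥ :=
    _root_.eq_bot_iff.2 <| (lie_le_inf _ _).trans (disjoint_iff_inf_le.1 hdisj.symm)
  refine isSemisimple_of_nondegenerate (B.restrict G)
    (B.nondegenerate_restrict_of_disjoint_orthogonal hBrefl (disjoint_toSubmodule.2 hdisj))
    (fun x y z => hBinv x y z) (fun x y => hBrefl x y) fun J hJ hJab => hJ.1 ?_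
  -- `J` is an ideal of `L`, since `L = G ⊕ Gᗮ` and `Gᗮ` commutes with `G`
  let J' : LieIdeal K L :=
    { J.toSubmodule.map (G.incl : G →ₗ[K] L) with
      lie_mem := by
        rintro z _ ⟨j, hj, rfl⟩
        obtain ⟨a, ha, b, hb, rfl⟩ := Submodule.mem_sup.1
          ((isCompl_semisimplePart_orthogonal hBinv hBrefl hB).sup_eq_top ▸ Submodule.mem_top :
            z ∈ G.toSubmodule ⊔ (orthogonal B hBinv G).toSubmodule)
        rw [add_lie]
        change ⁅a, (j : L)⁆ + ⁅b, (j : L)⁆ ∈ J.toSubmodule.map (G.incl : G →ₗ[K] L)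
        rw [(lie_eq_bot_iff _ _).1 hcomm b hb j j.2, add_zero]
        exact ⟨⁅(⟨a, ha⟩ : G), j⁆, J.lie_mem hj, rfl⟩ }
  have hJ' : J' = ⊥ := by
    refine eq_bot_of_isLieAbelian_of_le_semisimplePart hBinv hBrefl hB ?_ ?_
    · rw [LieIdeal.isLieAbelian_iff_forall_lie_eq_zero] at hJab ⊢
      rintro _ ⟨x, hx, rfl⟩ _ ⟨y, hy, rfl⟩
      exact congrArg Subtype.val (hJab x hx y hy)
    · rintro _ ⟨x, -, rfl⟩
      exact x.2
  refine (LieSubmodule.eq_bot_iff J).2 fun x hx => Subtype.ext ?_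
  exact (LieSubmodule.eq_bot_iff J').1 hJ' x ⟨x, hx, rfl⟩

end FiniteDimensional

end LieAlgebra

section Splitting

variable {M : Type*} [AddCommGroup M]

lemma Submodule.mem_ker_of_add_mem_ker {R : Type*} [Ring R] [Module R M] {p q : Submodule R M}
    (hpq : Disjoint p q) {E : M →ₗ[R] M} (hEp : ∀ x ∈ p, E x ∈ p) (hEq : ∀ x ∈ q, E x ∈ q)
    {a b : M} (ha : a ∈ p) (hb : b ∈ q) (hab : a + b ∈ LinearMap.ker E) : a ∈ LinearMap.ker E := by
  rw [LinearMap.mem_ker, map_add] at hab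
  refine Submodule.disjoint_def.1 hpq _ (hEp a ha) ?_
  rw [eq_neg_of_add_eq_zero_left hab]
  exact neg_mem (hEq b hb)

lemma Submodule.mem_ker_sub_id_inf_ker_comp_add_id_of_add_mem {R : Type*} [Ring R] [Module R M]
    {p q : Submodule R M} (hpq : Disjoint p q) {θ D : M →ₗ[R] M} (hθp : ∀ x ∈ p, θ x ∈ p)
    (hDp : ∀ x ∈ p, D x ∈ p) (hθq : ∀ x ∈ q, θ x ∈ q) (hDq : ∀ x ∈ q, D x ∈ q) {a b : M}
    (ha : a ∈ p) (hb : b ∈ q)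
    (hab : a + b ∈ LinearMap.ker (θ - LinearMap.id) ⊓ LinearMap.ker (D ∘ₗ D + LinearMap.id)) :
    a ∈ LinearMap.ker (θ - LinearMap.id) ⊓ LinearMap.ker (D ∘ₗ D + LinearMap.id) :=
  ⟨mem_ker_of_add_mem_ker hpq (fun x hx => sub_mem (hθp x hx) hx)
    (fun x hx => sub_mem (hθq x hx) hx) ha hb hab.1,
   mem_ker_of_add_mem_ker hpq (fun x hx => add_mem (hDp _ (hDp x hx)) hx)
    (fun x hx => add_mem (hDq _ (hDq x hx)) hx) ha hb hab.2⟩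

lemma Submodule.map_eq_self_of_involutive {R : Type*} [Semiring R] [Module R M]
    {f : M →ₗ[R] M} (hf : Function.Involutive f) {p : Submodule R M} (hp : ∀ x ∈ p, f x ∈ p) :
    p.map f = p :=
  le_antisymm (Submodule.map_le_iff_le_comap.2 hp) fun x hx => ⟨f x, hp x hx, hf x⟩

end Splitting

section Orthogonal

variable {R M : Type*} [CommRing R] [AddCommGroup M] [Module R M] {B : LinearMap.BilinForm R M}
  {N : Submodule R M} {f : M →ₗ[R] M} {m : M}

lemma LinearMap.BilinForm.apply_mem_orthogonal_of_skew (hf : ∀ x y, B (f x) y = -B x (f y))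
    (hN : ∀ x ∈ N, f x ∈ N) (hm : m ∈ B.orthogonal N) : f m ∈ B.orthogonal N := fun n hn => by
  change B n (f m) = 0
  rw [← neg_eq_zero, ← hf]
  exact hm _ (hN n hn)

lemma LinearMap.BilinForm.apply_mem_orthogonal_of_isometry (hf : ∀ x y, B (f x) (f y) = B x y)
    (hff : Function.Involutive f) (hN : ∀ x ∈ N, f x ∈ N) (hm : m ∈ B.orthogonal N) :
    f m ∈ B.orthogonal N := fun n hn => by
  change B n (f m) = 0
  rw [← hff n, hf]
  exact hm _ (hN n hn)

end Orthogonal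

section BracketSpan

variable {g : Type*} [LieRing g] [LieAlgebra ℝ g]

lemma bracketSpan_le_of_le_left {I : LieIdeal ℝ g} {s t : Submodule ℝ g} (hs : s ≤ I.toSubmodule) :
    bracketSpan s t ≤ I.toSubmodule :=
  Submodule.span_le.2 <| by
    rintro _ ⟨x, hx, y, -, rfl⟩
    exact lie_mem_left ℝ g I x y (hs hx)

lemma bracketSpan_inf_of_isCompl {I J : LieIdeal ℝ g} (hIJ : IsCompl I.toSubmodule J.toSubmodule)
    {P : Submodule ℝ g} (hP : ∀ a ∈ I, ∀ b ∈ J, a + b ∈ P → a ∈ P) :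
    bracketSpan (I.toSubmodule ⊓ P) (I.toSubmodule ⊓ P) = I.toSubmodule ⊓ bracketSpan P P := by
  have hzero : ∀ z ∈ I.toSubmodule, z ∈ J.toSubmodule → z = 0 :=
    Submodule.disjoint_def.1 hIJ.disjoint
  have hsplit : ∀ x ∈ P, ∃ a ∈ I.toSubmodule ⊓ P, ∃ b ∈ J.toSubmodule ⊓ P, a + b = x := by
    intro x hx
    obtain ⟨a, ha, b, hb, rfl⟩ := Submodule.mem_sup.1
      (hIJ.sup_eq_top ▸ Submodule.mem_top : x ∈ I.toSubmodule ⊔ J.toSubmodule)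
    have haP := hP a ha b hb hx
    exact ⟨a, ⟨ha, haP⟩, b, ⟨hb, by simpa using sub_mem hx haP⟩, rfl⟩
  have hle : bracketSpan P P ≤ bracketSpan (I.toSubmodule ⊓ P) (I.toSubmodule ⊓ P) ⊔
      bracketSpan (J.toSubmodule ⊓ P) (J.toSubmodule ⊓ P) := by
    refine Submodule.span_le.2 ?_
    rintro _ ⟨x, hx, y, hy, rfl⟩
    obtain ⟨a, ha, b, hb, rfl⟩ := hsplit x hx
    obtain ⟨a', ha', b', hb', rfl⟩ := hsplit y hy
    have hab' := hzero _ (lie_mem_left ℝ g I a b' ha.1) (lie_mem_right ℝ g J a b' hb'.1)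
    have hba' := hzero _ (lie_mem_right ℝ g I b a' ha'.1) (lie_mem_left ℝ g J b a' hb.1)
    rw [add_lie, lie_add, lie_add, hab', hba', add_zero, zero_add]
    exact Submodule.add_mem_sup (Submodule.subset_span ⟨a, ha, a', ha', rfl⟩)
      (Submodule.subset_span ⟨b, hb, b', hb', rfl⟩)
  refine le_antisymm (le_inf (bracketSpan_le_of_le_left inf_le_left) (Submodule.span_mono ?_))
    fun z hz => ?_
  · rintro _ ⟨x, hx, y, hy, rfl⟩
    exact ⟨x, hx.2, y, hy.2, rfl⟩
  obtain ⟨c, hc, d, hd, rfl⟩ := Submodule.mem_sup.1 (hle hz.2)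
  have hd0 : d = 0 := hzero d
    (by simpa using sub_mem hz.1 (bracketSpan_le_of_le_left inf_le_left hc))
    (bracketSpan_le_of_le_left inf_le_left hd)
  rwa [hd0, add_zero]

end BracketSpan

theorem stmt1 {g : Type*} [LieRing g] [LieAlgebra ℝ g] [Module.Finite ℝ g]
    (B : LinearMap.BilinForm ℝ g)
    (hsymm : ∀ x y, B x y = B y x)
    (hnd : B.Nondegenerate)
    (hinv : ∀ x y z : g, B ⁅x, y⁆ z + B y ⁅x, z⁆ = 0)
    (D : g →ₗ[ℝ] g)
    (hDder : ∀ x y : g, D ⁅x, y⁆ = ⁅D x, y⁆ + ⁅x, D y⁆)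
    (hDskew : ∀ x y, B (D x) y = -(B x (D y)))
    (θ : g →ₗ[ℝ] g)
    (hθ2 : θ ∘ₗ θ = LinearMap.id)
    (hθlie : ∀ x y : g, θ ⁅x, y⁆ = ⁅θ x, θ y⁆)
    (hθiso : ∀ x y, B (θ x) (θ y) = B x y)
    (hext : bracketSpan
        (LinearMap.ker (θ - LinearMap.id) ⊓ LinearMap.ker (D ∘ₗ D + LinearMap.id))
        (LinearMap.ker (θ - LinearMap.id) ⊓ LinearMap.ker (D ∘ₗ D + LinearMap.id)) =
        LinearMap.ker (θ - LinearMap.id) ⊓ LinearMap.ker D) :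
    ∃ g₁ g₂ : LieIdeal ℝ g,
      IsCompl g₁.toSubmodule g₂.toSubmodule ∧
      (∀ x ∈ g₁, ∀ y ∈ g₂, B x y = 0) ∧
      (B.restrict g₁.toSubmodule).Nondegenerate ∧
      (B.restrict g₂.toSubmodule).Nondegenerate ∧
      (∀ x ∈ g₁, D x ∈ g₁) ∧ (∀ x ∈ g₂, D x ∈ g₂) ∧
      Submodule.map θ g₁.toSubmodule = g₁.toSubmodule ∧
      Submodule.map θ g₂.toSubmodule = g₂.toSubmodule ∧
      (g₁ = ⊥ ∨ LieAlgebra.IsSemisimple ℝ g₁) ∧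
      (¬ ∃ I : LieIdeal ℝ g, I ≠ ⊥ ∧ I ≤ g₂ ∧ LieAlgebra.IsSimple ℝ I) ∧
      bracketSpan
          (g₁.toSubmodule ⊓ (LinearMap.ker (θ - LinearMap.id) ⊓
            LinearMap.ker (D ∘ₗ D + LinearMap.id)))
          (g₁.toSubmodule ⊓ (LinearMap.ker (θ - LinearMap.id) ⊓
            LinearMap.ker (D ∘ₗ D + LinearMap.id))) =
        g₁.toSubmodule ⊓ (LinearMap.ker (θ - LinearMap.id) ⊓ LinearMap.ker D) ∧
      bracketSpan
          (g₂.toSubmodule ⊓ (LinearMap.ker (θ - LinearMap.id) ⊓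
            LinearMap.ker (D ∘ₗ D + LinearMap.id)))
          (g₂.toSubmodule ⊓ (LinearMap.ker (θ - LinearMap.id) ⊓
            LinearMap.ker (D ∘ₗ D + LinearMap.id))) =
        g₂.toSubmodule ⊓ (LinearMap.ker (θ - LinearMap.id) ⊓ LinearMap.ker D) := by
  have hBrefl : B.IsRefl := fun x y h => (hsymm y x).trans h
  have hBinv : B.lieInvariant g := fun x y z => eq_neg_of_add_eq_zero_left (hinv x y z)
  have hθθ : Function.Involutive θ := LinearMap.congr_fun hθ2
  let D' : LieDerivation ℝ g g :=
    { toLinearMap := D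
      leibniz' := fun a b => by rw [hDder, sub_eq_add_neg, lie_skew, add_comm] }
  let e : g ≃ₗ⁅ℝ⁆ g :=
    { θ with map_lie' := hθlie _ _, invFun := θ, left_inv := hθθ, right_inv := hθθ }
  set g₁ := LieAlgebra.semisimplePart ℝ g
  set g₂ := LieAlgebra.InvariantForm.orthogonal B hBinv g₁
  have hcompl : IsCompl g₁.toSubmodule g₂.toSubmodule :=
    LieAlgebra.isCompl_semisimplePart_orthogonal hBinv hBrefl hnd
  have hD₁ : ∀ x ∈ g₁, D x ∈ g₁ := fun x => LieAlgebra.derivation_apply_mem_semisimplePart D'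
  have hθ₁ : ∀ x ∈ g₁, θ x ∈ g₁ := fun x => LieAlgebra.equiv_apply_mem_semisimplePart e
  have hD₂ : ∀ x ∈ g₂, D x ∈ g₂ := fun x => B.apply_mem_orthogonal_of_skew hDskew hD₁
  have hθ₂ : ∀ x ∈ g₂, θ x ∈ g₂ := fun x => B.apply_mem_orthogonal_of_isometry hθiso hθθ hθ₁
  refine ⟨g₁, g₂, hcompl, fun x hx y hy => hy x hx,
    B.nondegenerate_restrict_of_disjoint_orthogonal hBrefl hcompl.disjoint, ?_, hD₁, hD₂,
    Submodule.map_eq_self_of_involutive hθθ hθ₁, Submodule.map_eq_self_of_involutive hθθ hθ₂,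
    Or.inr (LieAlgebra.isSemisimple_semisimplePart hBinv hBrefl hnd), ?_,
    (bracketSpan_inf_of_isCompl hcompl fun _ ha _ hb =>
      Submodule.mem_ker_sub_id_inf_ker_comp_add_id_of_add_mem hcompl.disjoint
        hθ₁ hD₁ hθ₂ hD₂ ha hb).trans (by rw [hext]),
    (bracketSpan_inf_of_isCompl hcompl.symm fun _ hb _ ha =>
      Submodule.mem_ker_sub_id_inf_ker_comp_add_id_of_add_mem hcompl.symm.disjoint
        hθ₂ hD₂ hθ₁ hD₁ hb ha).trans (by rw [hext])⟩
  · rw [B.restrict_nondegenerate_iff_isCompl_orthogonal hBrefl,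
      LieAlgebra.InvariantForm.orthogonal_toSubmodule, B.orthogonal_orthogonal hnd hBrefl]
    exact hcompl.symm
  · rintro ⟨I, hI, hIle, hIs⟩
    exact hI <| disjoint_self.1 <|
      (LieAlgebra.disjoint_semisimplePart_orthogonal hBinv hBrefl hnd).mono
        (le_sSup (LieAlgebra.mem_nonabelianAtoms_of_isSimple hIs)) hIle
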